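/- arXiv:math/9201300 — 7 statements merged into one kernel-verified Lean document; each statement's English description precedes it below -/
import Mathlib

section
/- Let $X$ be a measurable space, $\lambda$ a probability measure on $X$, $f : X \to X$ measurable with $f_*\lambda \ll \lambda$, and $\mu$ a measure with $\mu \ll \lambda$. Let $I_1, I_2$ be measurable sets such that $\lambda(f^{-n_0}(I_1) \cap I_2) > 0$ for some $n_0 \ge 0$, and suppose that for some $K > 0$ and all $n \ge 0$, the measure $f^n_*\mu$ restricted to $I_2$ has distortion bounded by $K$ relative to $\lambda$ (with $0 < \mu(f^{-n}(I_2)) < \infty$ and $0 < \lambda(I_2) < \infty$). Then there exists $\epsilon > 0$ such that $\mu(f^{-n-n_0}(I_1)) \ge \epsilon\, \mu(f^{-n}(I_2))$ for all $n \ge 0$. -/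
open scoped ENNReal
open MeasureTheory Set Function

theorem Function.preimage_iterate_inter_subset_preimage_iterate_add {α : Type*} (f : α → α)
    (n m : ℕ) (s t : Set α) : f^[n] ⁻¹' (f^[m] ⁻¹' s ∩ t) ⊆ f^[n + m] ⁻¹' s := by
  intro x hx
  rw [mem_preimage, add_comm, iterate_add_apply]
  exact hx.1

theorem stmt_1_general {X : Type*} [MeasurableSpace X]
    (lam : Measure X)
    (f : X → X) (hf : Measurable f)
    (mu : Measure X)
    (I₁ I₂ : Set X) (hI₁ : MeasurableSet I₁) (hI₂ : MeasurableSet I₂)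
    (n₀ : ℕ) (hn₀ : 0 < lam (f^[n₀] ⁻¹' I₁ ∩ I₂))
    (hlI₂' : lam I₂ < ⊤)
    (K : ℝ≥0∞) (hK' : K < ⊤)
    (hdist : ∀ n : ℕ, ∀ A : Set X, MeasurableSet A → A ⊆ I₂ →
      (1 / K) * (lam A / lam I₂) ≤ mu (f^[n] ⁻¹' A) / mu (f^[n] ⁻¹' I₂) ∧
      mu (f^[n] ⁻¹' A) / mu (f^[n] ⁻¹' I₂) ≤ K * (lam A / lam I₂)) :
    ∃ ε : ℝ≥0∞, 0 < ε ∧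
      ∀ n : ℕ, ε * mu (f^[n] ⁻¹' I₂) ≤ mu (f^[(n + n₀)] ⁻¹' I₁) := by
  set A := f^[n₀] ⁻¹' I₁ ∩ I₂
  have hA : MeasurableSet A := (hf.iterate n₀ hI₁).inter hI₂
  refine ⟨(1 / K) * (lam A / lam I₂), ?_, fun n => ?_⟩
  · exact ENNReal.mul_pos (ENNReal.div_pos one_ne_zero hK'.ne).ne'
      (ENNReal.div_pos hn₀.ne' hlI₂'.ne).ne'
  · calc (1 / K) * (lam A / lam I₂) * mu (f^[n] ⁻¹' I₂)
        ≤ mu (f^[n] ⁻¹' A) :=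
          ENNReal.mul_le_of_le_div (hdist n A hA inter_subset_right).1
      _ ≤ mu (f^[n + n₀] ⁻¹' I₁) :=
          measure_mono (preimage_iterate_inter_subset_preimage_iterate_add f n n₀ I₁ I₂)

theorem stmt_1 {X : Type*} [MeasurableSpace X]
    (lam : Measure X) [IsProbabilityMeasure lam]
    (f : X → X) (hf : Measurable f)
    (hquasi : lam.map f ≪ lam)
    (mu : Measure X) (hmu : mu ≪ lam)
    (I₁ I₂ : Set X) (hI₁ : MeasurableSet I₁) (hI₂ : MeasurableSet I₂)
    (n₀ : ℕ) (hn₀ : 0 < lam (f^[n₀] ⁻¹' I₁ ∩ I₂))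
    (hlI₂ : 0 < lam I₂) (hlI₂' : lam I₂ < ⊤)
    (K : ℝ≥0∞) (hK : 0 < K) (hK' : K < ⊤)
    (hfin : ∀ n : ℕ, 0 < mu (f^[n] ⁻¹' I₂) ∧ mu (f^[n] ⁻¹' I₂) < ⊤)
    (hdist : ∀ n : ℕ, ∀ A : Set X, MeasurableSet A → A ⊆ I₂ →
      (1 / K) * (lam A / lam I₂) ≤ mu (f^[n] ⁻¹' A) / mu (f^[n] ⁻¹' I₂) ∧
      mu (f^[n] ⁻¹' A) / mu (f^[n] ⁻¹' I₂) ≤ K * (lam A / lam I₂)) :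
    ∃ ε : ℝ≥0∞, 0 < ε ∧
      ∀ n : ℕ, ε * mu (f^[n] ⁻¹' I₂) ≤ mu (f^[(n + n₀)] ⁻¹' I₁) :=
  stmt_1_general lam f hf mu I₁ I₂ hI₁ hI₂ n₀ hn₀ hlI₂' K hK' hdist
end

section
/- Let $f : X \to X$ be measurable and $\mu$ a measure on $X$. Suppose $I_1, I_2$ are measurable sets with $\mu(I_2) > 0$, $\sup_{n \ge 0} \mu(f^{-n}(I_2)) = M < \infty$, and there exist $\epsilon > 0$ and $n_0 \ge 0$ with $\mu(f^{-n-n_0}(I_1)) \ge \epsilon\, \mu(f^{-n}(I_2))$ for all $n \ge 0$. Then for all $n > n_0$, setting $S_n\mu(A) = \sum_{i=0}^{n-1} \mu(f^{-i}(A))$, one has $\frac{S_n\mu(I_1)}{S_n\mu(I_2)} \ge \epsilon \frac{\mu(I_2)}{n_0 M + \mu(I_2)} > 0$. -/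
/-! Write `n = m + n₀`. The first `m` terms of `S_n μ(I₂)` are matched term by term by the last
`m` terms of `S_n μ(I₁)`, up to the factor `ε`, while the remaining `n₀` terms of `S_n μ(I₂)` are
each at most `M`. Hence `S_n μ(I₁) / S_n μ(I₂) ≥ ε B / (B + n₀ M)` with `B = S_m μ(I₂) ≥ μ(I₂)`,
and `B ↦ B / (B + n₀ M)` is monotone. -/

open scoped ENNReal
open MeasureTheory Finset

theorem ENNReal.div_add_le_div_add {x y c : ℝ≥0∞} (hxy : x ≤ y) (hy : y ≠ ∞) :
    x / (c + x) ≤ y / (c + y) := by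
  rcases eq_or_ne c ∞ with rfl | hc
  · simp
  rcases eq_or_ne (c + x) 0 with hcx | hcx
  · simp [(add_eq_zero.1 hcx).2]
  have hcy : c + y ≠ 0 := ne_bot_of_le_ne_bot hcx (by gcongr)
  have hcx_top : c + x ≠ ∞ := ENNReal.add_ne_top.2 ⟨hc, ne_top_of_le_ne_top hy hxy⟩
  rw [ENNReal.le_div_iff_mul_le (Or.inl hcy) (Or.inl (ENNReal.add_ne_top.2 ⟨hc, hy⟩)),
    div_eq_mul_inv, mul_right_comm, ← div_eq_mul_inv, ENNReal.div_le_iff hcx hcx_top]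
  calc x * (c + y) = x * c + x * y := mul_add _ _ _
    _ ≤ y * c + x * y := by gcongr
    _ = y * (c + x) := by ring

theorem ENNReal.sum_range_add_le_of_le {b : ℕ → ℝ≥0∞} {M : ℝ≥0∞} (hb : ∀ i, b i ≤ M) (m k : ℕ) :
    ∑ i ∈ range (m + k), b i ≤ ∑ i ∈ range m, b i + k * M := by
  rw [sum_range_add]
  gcongr
  calc ∑ i ∈ range k, b (m + i) ≤ ∑ _i ∈ range k, M := sum_le_sum fun i _ => hb _
    _ = k * M := by simp

theorem ENNReal.mul_sum_range_le_sum_range_add {a b : ℕ → ℝ≥0∞} {ε : ℝ≥0∞} {k : ℕ}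
    (hab : ∀ i, ε * b i ≤ a (i + k)) (m : ℕ) :
    ε * ∑ i ∈ range m, b i ≤ ∑ i ∈ range (m + k), a i := by
  rw [add_comm m k, sum_range_add, mul_sum]
  calc ∑ i ∈ range m, ε * b i ≤ ∑ i ∈ range m, a (k + i) :=
        sum_le_sum fun i _ => (hab i).trans_eq (by rw [add_comm])
    _ ≤ _ := le_add_self

theorem ENNReal.mul_div_le_sum_range_div_sum_range {a b : ℕ → ℝ≥0∞} {M ε : ℝ≥0∞} {n₀ n : ℕ}
    (hbM : ∀ i, b i ≤ M) (hM : M ≠ ∞) (hab : ∀ i, ε * b i ≤ a (i + n₀)) (hn : n₀ < n) :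
    ε * (b 0 / (n₀ * M + b 0)) ≤ (∑ i ∈ range n, a i) / ∑ i ∈ range n, b i := by
  obtain ⟨m, rfl⟩ : ∃ m, n = m + n₀ := ⟨n - n₀, (Nat.sub_add_cancel hn.le).symm⟩
  have hm : 0 < m := by omega
  set B := ∑ i ∈ range m, b i
  have hb0B : b 0 ≤ B := single_le_sum (fun i _ => zero_le) (mem_range.2 hm)
  have hB : B ≠ ∞ := ENNReal.sum_ne_top.2 fun i _ => ne_top_of_le_ne_top hM (hbM i)
  calc ε * (b 0 / (n₀ * M + b 0)) ≤ ε * (B / (n₀ * M + B)) := by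
        gcongr ε * ?_
        exact ENNReal.div_add_le_div_add hb0B hB
    _ = ε * B / (n₀ * M + B) := (mul_div_assoc _ _ _).symm
    _ ≤ ε * B / ∑ i ∈ range (m + n₀), b i :=
        ENNReal.div_le_div_left ((ENNReal.sum_range_add_le_of_le hbM m n₀).trans_eq (add_comm _ _)) _
    _ ≤ _ := ENNReal.div_le_div_right (ENNReal.mul_sum_range_le_sum_range_add hab m) _

theorem stmt_2_general {X : Type*} [MeasurableSpace X]
    (f : X → X)
    (mu : Measure X)
    (I₁ I₂ : Set X)
    (hmI₂ : 0 < mu I₂)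
    (M : ℝ≥0∞) (hM : M = ⨆ n : ℕ, mu (f^[n] ⁻¹' I₂)) (hM' : M < ⊤)
    (ε : ℝ≥0∞) (hε : 0 < ε) (n₀ : ℕ)
    (hcomp : ∀ n : ℕ, ε * mu (f^[n] ⁻¹' I₂) ≤ mu (f^[(n + n₀)] ⁻¹' I₁)) :
    ∀ n : ℕ, n₀ < n →
      ε * (mu I₂ / (n₀ * M + mu I₂)) ≤
        (∑ i ∈ Finset.range n, mu (f^[i] ⁻¹' I₁)) /
          (∑ i ∈ Finset.range n, mu (f^[i] ⁻¹' I₂)) ∧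
      0 < ε * (mu I₂ / (n₀ * M + mu I₂)) := by
  intro n hn
  have hbM : ∀ i, mu (f^[i] ⁻¹' I₂) ≤ M := fun i => hM ▸ le_iSup (fun k => mu (f^[k] ⁻¹' I₂)) i
  have hI₂M : mu I₂ ≤ M := by simpa using hbM 0
  have hden : (n₀ : ℝ≥0∞) * M + mu I₂ ≠ ∞ :=
    ENNReal.add_ne_top.2 ⟨ENNReal.mul_ne_top (ENNReal.natCast_ne_top n₀) hM'.ne,
      ne_top_of_le_ne_top hM'.ne hI₂M⟩
  refine ⟨?_, ENNReal.mul_pos hε.ne' (ENNReal.div_pos hmI₂.ne' hden).ne'⟩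
  simpa using ENNReal.mul_div_le_sum_range_div_sum_range hbM hM'.ne hcomp hn

theorem stmt_2 {X : Type*} [MeasurableSpace X]
    (f : X → X) (hf : Measurable f)
    (mu : Measure X)
    (I₁ I₂ : Set X) (hI₁ : MeasurableSet I₁) (hI₂ : MeasurableSet I₂)
    (hmI₂ : 0 < mu I₂)
    (M : ℝ≥0∞) (hM : M = ⨆ n : ℕ, mu (f^[n] ⁻¹' I₂)) (hM' : M < ⊤)
    (ε : ℝ≥0∞) (hε : 0 < ε) (n₀ : ℕ)
    (hcomp : ∀ n : ℕ, ε * mu (f^[n] ⁻¹' I₂) ≤ mu (f^[(n + n₀)] ⁻¹' I₁)) :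
    ∀ n : ℕ, n₀ < n →
      ε * (mu I₂ / (n₀ * M + mu I₂)) ≤
        (∑ i ∈ Finset.range n, mu (f^[i] ⁻¹' I₁)) /
          (∑ i ∈ Finset.range n, mu (f^[i] ⁻¹' I₂)) ∧
      0 < ε * (mu I₂ / (n₀ * M + mu I₂)) :=
  stmt_2_general f mu I₁ I₂ hmI₂ M hM hM' ε hε n₀ hcomp
end

section
/- Let $f : X \to X$ be measurable, $\mu$ a measure, and $I_1, I_2$ measurable sets with $\mu(I_1), \mu(I_2) > 0$, $\sup_{n\ge 0}\mu(f^{-n}(I_1)) < \infty$, $\sup_{n\ge 0}\mu(f^{-n}(I_2)) < \infty$, and suppose there are $\epsilon_1, \epsilon_2 > 0$ and $n_1, n_2 \ge 0$ such that $\mu(f^{-n-n_1}(I_1)) \ge \epsilon_1 \mu(f^{-n}(I_2))$ and $\mu(f^{-n-n_2}(I_2)) \ge \epsilon_2 \mu(f^{-n}(I_1))$ for all $n \ge 0$. Then there exists $K < \infty$ such that $1/K \le S_n\mu(I_1)/S_n\mu(I_2) \le K$ for all $n \ge 1$, where $S_n\mu(A) = \sum_{i=0}^{n-1}\mu(f^{-i}(A))$.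 -/
/-!
Write `a i = μ(f^{-i} I₁)` and `b i = μ(f^{-i} I₂)`, both bounded by some `M < ∞`. Summing
`ε₁ b i ≤ a (i + n₁)` over `i < n` gives `ε₁ S_n b ≤ S_{n+n₁} a ≤ S_n a + n₁ M`, and
`n₁ M ≤ (n₁ M / a 0) S_n a` once `n ≥ 1`; hence `S_n b ≤ K₁ S_n a`. Symmetrically
`S_n a ≤ K₂ S_n b`, and `K = max K₁ K₂` bounds the ratio on both sides.
-/

open scoped ENNReal
open MeasureTheory Finset

namespace ENNReal

theorem sum_range_comp_add_le (a : ℕ → ℝ≥0∞) (m n : ℕ) :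
    ∑ i ∈ range n, a (i + m) ≤ ∑ i ∈ range n, a i + ∑ i ∈ range m, a (n + i) := by
  calc ∑ i ∈ range n, a (i + m)
      ≤ ∑ i ∈ range m, a i + ∑ i ∈ range n, a (m + i) := by
        simp only [Nat.add_comm _ m]
        exact le_add_self
    _ = ∑ i ∈ range n, a i + ∑ i ∈ range m, a (n + i) := by
        rw [← sum_range_add, Nat.add_comm, sum_range_add]

theorem sum_range_comp_add_le_add_mul {a : ℕ → ℝ≥0∞} {M : ℝ≥0∞} (hM : ∀ i, a i ≤ M)
    (m n : ℕ) : ∑ i ∈ range n, a (i + m) ≤ ∑ i ∈ range n, a i + m * M := by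
  refine (sum_range_comp_add_le a m n).trans (add_le_add_right ?_ _)
  simpa using sum_le_card_nsmul (range m) (fun i => a (n + i)) M fun i _ => hM _

theorem exists_sum_range_le_mul_sum_range {a b : ℕ → ℝ≥0∞} {M ε : ℝ≥0∞} {m : ℕ}
    (ha₀ : a 0 ≠ 0) (hM : ∀ i, a i ≤ M) (hM_top : M ≠ ∞) (hε : ε ≠ 0)
    (hcomp : ∀ n, ε * b n ≤ a (n + m)) :
    ∃ K, K < ∞ ∧ ∀ n, ∑ i ∈ range n, b i ≤ K * ∑ i ∈ range n, a i := by
  -- `min ε 1` satisfies the same comparison and is finite, so it can be divided by.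
  set δ := min ε 1
  have hδ₀ : δ ≠ 0 := by simp [δ, hε]
  have hδ_top : δ ≠ ∞ := (min_le_right ε 1).trans_lt one_lt_top |>.ne
  set c := m * M / a 0
  have hc : c ≠ ∞ := div_ne_top (mul_ne_top (natCast_ne_top m) hM_top) ha₀
  refine ⟨δ⁻¹ * (1 + c), mul_lt_top (inv_lt_top.2 (pos_iff_ne_zero.2 hδ₀))
    (add_lt_top.2 ⟨one_lt_top, hc.lt_top⟩), fun n => ?_⟩
  rcases Nat.eq_zero_or_pos n with rfl | hn
  · simp
  have hmM : (m : ℝ≥0∞) * M ≤ c * ∑ i ∈ range n, a i :=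
    calc (m : ℝ≥0∞) * M = c * a 0 :=
          (ENNReal.div_mul_cancel ha₀ ((hM 0).trans_lt hM_top.lt_top).ne).symm
      _ ≤ c * ∑ i ∈ range n, a i := by
        gcongr
        exact single_le_sum (fun i _ => zero_le) (mem_range.2 hn)
  rw [mul_assoc, ← mul_le_iff_le_inv hδ₀ hδ_top, mul_sum]
  calc ∑ i ∈ range n, δ * b i ≤ ∑ i ∈ range n, a (i + m) :=
        sum_le_sum fun i _ => (mul_le_mul_left (min_le_left ε 1) _).trans (hcomp i)
    _ ≤ ∑ i ∈ range n, a i + m * M := sum_range_comp_add_le_add_mul hM m n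
    _ ≤ (1 + c) * ∑ i ∈ range n, a i := by
        rw [add_mul, one_mul]
        gcongr

theorem inv_le_div_and_div_le_of_le_mul {x y K : ℝ≥0∞} (hy₀ : y ≠ 0) (hy_top : y ≠ ∞)
    (hxy : x ≤ K * y) (hyx : y ≤ K * x) : K⁻¹ ≤ x / y ∧ x / y ≤ K := by
  refine ⟨?_, div_le_of_le_mul hxy⟩
  rw [inv_le_iff_inv_le, ENNReal.inv_div (Or.inl hy_top) (Or.inl hy₀)]
  exact div_le_of_le_mul hyx

end ENNReal

theorem stmt_3_general {X : Type*} [MeasurableSpace X]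
    (f : X → X)
    (mu : Measure X)
    (I₁ I₂ : Set X)
    (hfin : ∀ n : ℕ, 0 < mu (f^[n] ⁻¹' I₁) ∧ mu (f^[n] ⁻¹' I₁) < ⊤ ∧
      0 < mu (f^[n] ⁻¹' I₂) ∧ mu (f^[n] ⁻¹' I₂) < ⊤)
    (hsup₁ : (⨆ n : ℕ, mu (f^[n] ⁻¹' I₁)) < ⊤)
    (hsup₂ : (⨆ n : ℕ, mu (f^[n] ⁻¹' I₂)) < ⊤)
    (ε₁ ε₂ : ℝ≥0∞) (hε₁ : 0 < ε₁) (hε₂ : 0 < ε₂) (n₁ n₂ : ℕ)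
    (hcomp₁ : ∀ n : ℕ, ε₁ * mu (f^[n] ⁻¹' I₂) ≤ mu (f^[(n + n₁)] ⁻¹' I₁))
    (hcomp₂ : ∀ n : ℕ, ε₂ * mu (f^[n] ⁻¹' I₁) ≤ mu (f^[(n + n₂)] ⁻¹' I₂)) :
    ∃ K : ℝ≥0∞, K < ⊤ ∧ ∀ n : ℕ, 1 ≤ n →
      1 / K ≤ (∑ i ∈ Finset.range n, mu (f^[i] ⁻¹' I₁)) /
              (∑ i ∈ Finset.range n, mu (f^[i] ⁻¹' I₂)) ∧
      (∑ i ∈ Finset.range n, mu (f^[i] ⁻¹' I₁)) /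
        (∑ i ∈ Finset.range n, mu (f^[i] ⁻¹' I₂)) ≤ K := by
  set a : ℕ → ℝ≥0∞ := fun i => mu (f^[i] ⁻¹' I₁)
  set b : ℕ → ℝ≥0∞ := fun i => mu (f^[i] ⁻¹' I₂)
  obtain ⟨K₁, hK₁, hba⟩ := ENNReal.exists_sum_range_le_mul_sum_range (hfin 0).1.ne'
    (le_iSup a) hsup₁.ne hε₁.ne' hcomp₁
  obtain ⟨K₂, hK₂, hab⟩ := ENNReal.exists_sum_range_le_mul_sum_range (hfin 0).2.2.1.ne'
    (le_iSup b) hsup₂.ne hε₂.ne' hcomp₂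
  refine ⟨max K₁ K₂, max_lt hK₁ hK₂, fun n hn => one_div (max K₁ K₂) ▸ ?_⟩
  have hSb₀ : ∑ i ∈ range n, b i ≠ 0 :=
    ((hfin 0).2.2.1.trans_le (single_le_sum (f := b) (fun i _ => zero_le) (mem_range.2 hn))).ne'
  have hSb_top : ∑ i ∈ range n, b i ≠ ∞ :=
    ENNReal.sum_ne_top.2 fun i _ => ((le_iSup b i).trans_lt hsup₂).ne
  exact ENNReal.inv_le_div_and_div_le_of_le_mul hSb₀ hSb_top
    ((hab n).trans (by gcongr; exact le_max_right _ _))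
    ((hba n).trans (by gcongr; exact le_max_left _ _))

theorem stmt_3 {X : Type*} [MeasurableSpace X]
    (f : X → X) (hf : Measurable f)
    (mu : Measure X)
    (I₁ I₂ : Set X) (hI₁ : MeasurableSet I₁) (hI₂ : MeasurableSet I₂)
    (hfin : ∀ n : ℕ, 0 < mu (f^[n] ⁻¹' I₁) ∧ mu (f^[n] ⁻¹' I₁) < ⊤ ∧
      0 < mu (f^[n] ⁻¹' I₂) ∧ mu (f^[n] ⁻¹' I₂) < ⊤)
    (hsup₁ : (⨆ n : ℕ, mu (f^[n] ⁻¹' I₁)) < ⊤)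
    (hsup₂ : (⨆ n : ℕ, mu (f^[n] ⁻¹' I₂)) < ⊤)
    (ε₁ ε₂ : ℝ≥0∞) (hε₁ : 0 < ε₁) (hε₂ : 0 < ε₂) (n₁ n₂ : ℕ)
    (hcomp₁ : ∀ n : ℕ, ε₁ * mu (f^[n] ⁻¹' I₂) ≤ mu (f^[(n + n₁)] ⁻¹' I₁))
    (hcomp₂ : ∀ n : ℕ, ε₂ * mu (f^[n] ⁻¹' I₁) ≤ mu (f^[(n + n₂)] ⁻¹' I₂)) :
    ∃ K : ℝ≥0∞, K < ⊤ ∧ ∀ n : ℕ, 1 ≤ n →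
      1 / K ≤ (∑ i ∈ Finset.range n, mu (f^[i] ⁻¹' I₁)) /
              (∑ i ∈ Finset.range n, mu (f^[i] ⁻¹' I₂)) ∧
      (∑ i ∈ Finset.range n, mu (f^[i] ⁻¹' I₁)) /
        (∑ i ∈ Finset.range n, mu (f^[i] ⁻¹' I₂)) ≤ K :=
  stmt_3_general f mu I₁ I₂ hfin hsup₁ hsup₂ ε₁ ε₂ hε₁ hε₂ n₁ n₂ hcomp₁ hcomp₂
end

section
/- Let $f : X \to X$ be measurable and $\mu$ a measure on $X$. Fix a measurable set $I_0$, and for $n \ge 1$ define $S_n\mu(A) = \sum_{i=0}^{n-1}\mu(f^{-i}(A))$ and $Q_n\mu(A) = S_n\mu(A)/S_n\mu(I_0)$ (assuming $0 < S_n\mu(I_0) < \infty$). Let $A$ be a measurable set with $\sup_{n \ge 0}\mu(f^{-n}(A)) < \infty$ and $\mu(A) < \infty$, and suppose $\sum_{n=0}^{\infty}\mu(f^{-n}(I_0)) = \infty$. If along some subsequence $n_k \to \infty$ both $Q_{n_k}\mu(A) \to \nu(A)$ and $Q_{n_k}\mu(f^{-1}(A)) \to \nu(f^{-1}(A))$ for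 some limit values, then $\nu(f^{-1}(A)) = \nu(A)$. -/
/-!
Shifting the Birkhoff sum by one step telescopes:
`S n (f⁻¹ A) + μ A = S n A + μ (f^[n]⁻¹ A)`.
Both boundary terms are bounded by `⨆ n, μ (f^[n]⁻¹ A) < ∞`, while the normalising
denominators `S n I₀` tend to `∞` because `∑ n, μ (f^[n]⁻¹ I₀)` diverges. Dividing the
identity by `S n I₀` and passing to the limit along the subsequence gives `νfA = νA`.
-/

open scoped ENNReal Topology
open MeasureTheory Set Function Filter

lemma Finset.sum_range_preimage_iterate_preimage_add {X M : Type*} [AddCommMonoid M]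
    (m : Set X → M) (f : X → X) (A : Set X) (n : ℕ) :
    ∑ i ∈ Finset.range n, m (f^[i] ⁻¹' (f ⁻¹' A)) + m A =
      ∑ i ∈ Finset.range n, m (f^[i] ⁻¹' A) + m (f^[n] ⁻¹' A) := by
  have hshift : ∀ i, f^[i] ⁻¹' (f ⁻¹' A) = f^[i + 1] ⁻¹' A := fun i => by
    rw [iterate_succ', preimage_comp]
  simp_rw [hshift]
  exact (Finset.sum_range_succ' (fun i => m (f^[i] ⁻¹' A)) n).symm.trans
    (Finset.sum_range_succ _ n)

namespace ENNReal

variable {ι : Type*} {l : Filter ι}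

lemma tendsto_div_nhds_zero_of_le {u D : ι → ℝ≥0∞} {C : ℝ≥0∞} (hC : C ≠ ⊤)
    (hu : ∀ k, u k ≤ C) (hD : Tendsto D l (𝓝 ⊤)) :
    Tendsto (fun k => u k / D k) l (𝓝 0) := by
  have hCD : Tendsto (fun k => C / D k) l (𝓝 0) := by
    simpa using ENNReal.Tendsto.const_div hD (Or.inr hC)
  exact tendsto_of_tendsto_of_tendsto_of_le_of_le tendsto_const_nhds hCD
    (fun _ => zero_le) (fun k => ENNReal.div_le_div_right (hu k) _)

lemma eq_of_tendsto_div_of_add_eq_add [l.NeBot] {a b c d D : ι → ℝ≥0∞} {C x y : ℝ≥0∞}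
    (h : ∀ k, a k + c k = b k + d k) (hC : C ≠ ⊤) (hc : ∀ k, c k ≤ C) (hd : ∀ k, d k ≤ C)
    (hD : Tendsto D l (𝓝 ⊤)) (ha : Tendsto (fun k => a k / D k) l (𝓝 x))
    (hb : Tendsto (fun k => b k / D k) l (𝓝 y)) : x = y := by
  have hac : Tendsto (fun k => (a k + c k) / D k) l (𝓝 (x + 0)) := by
    simpa only [ENNReal.add_div] using ha.add (tendsto_div_nhds_zero_of_le hC hc hD)
  have hbd : Tendsto (fun k => (b k + d k) / D k) l (𝓝 (y + 0)) := by
    simpa only [ENNReal.add_div] using hb.add (tendsto_div_nhds_zero_of_le hC hd hD)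
  simpa using tendsto_nhds_unique (hac.congr fun k => by rw [h k]) hbd

end ENNReal

theorem stmt_7_general {X : Type*} [MeasurableSpace X]
    (f : X → X)
    (mu : Measure X)
    (I₀ : Set X)
    (S : ℕ → Set X → ℝ≥0∞)
    (hS : ∀ n A, S n A = ∑ i ∈ Finset.range n, mu (f^[i] ⁻¹' A))
    (A : Set X)
    (hsupA : (⨆ n : ℕ, mu (f^[n] ⁻¹' A)) < ⊤)
    (hdiv : ∑' n : ℕ, mu (f^[n] ⁻¹' I₀) = ⊤)
    (νA νfA : ℝ≥0∞)
    (nk : ℕ → ℕ) (hnk : StrictMono nk)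
    (hlimA : Tendsto (fun k => S (nk k) A / S (nk k) I₀) atTop (𝓝 νA))
    (hlimfA : Tendsto (fun k => S (nk k) (f ⁻¹' A) / S (nk k) I₀) atTop (𝓝 νfA)) :
    νfA = νA := by
  have hD : Tendsto (fun n => S n I₀) atTop (𝓝 ⊤) := by
    simpa only [hS, hdiv] using ENNReal.tendsto_nat_tsum fun n => mu (f^[n] ⁻¹' I₀)
  have hbound : ∀ n, mu (f^[n] ⁻¹' A) ≤ ⨆ n : ℕ, mu (f^[n] ⁻¹' A) :=
    le_iSup fun n => mu (f^[n] ⁻¹' A)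
  refine ENNReal.eq_of_tendsto_div_of_add_eq_add (fun k => ?_) hsupA.ne (fun _ => hbound 0)
    (fun k => hbound (nk k)) (hD.comp hnk.tendsto_atTop) hlimfA hlimA
  rw [hS, hS]
  exact Finset.sum_range_preimage_iterate_preimage_add mu f A (nk k)

theorem stmt_7 {X : Type*} [MeasurableSpace X]
    (f : X → X) (hf : Measurable f)
    (mu : Measure X)
    (I₀ : Set X) (hI₀ : MeasurableSet I₀)
    (S : ℕ → Set X → ℝ≥0∞)
    (hS : ∀ n A, S n A = ∑ i ∈ Finset.range n, mu (f^[i] ⁻¹' A))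
    (hSfin : ∀ n : ℕ, 1 ≤ n → 0 < S n I₀ ∧ S n I₀ < ⊤)
    (A : Set X) (hA : MeasurableSet A)
    (hsupA : (⨆ n : ℕ, mu (f^[n] ⁻¹' A)) < ⊤) (hmuA : mu A < ⊤)
    (hdiv : ∑' n : ℕ, mu (f^[n] ⁻¹' I₀) = ⊤)
    (νA νfA : ℝ≥0∞)
    (nk : ℕ → ℕ) (hnk : StrictMono nk) (hnk1 : ∀ k, 1 ≤ nk k)
    (hlimA : Tendsto (fun k => S (nk k) A / S (nk k) I₀) atTop (𝓝 νA))
    (hlimfA : Tendsto (fun k => S (nk k) (f ⁻¹' A) / S (nk k) I₀) atTop (𝓝 νfA)) :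
    νfA = νA :=
  stmt_7_general f mu I₀ S hS A hsupA hdiv νA νfA nk hnk hlimA hlimfA
end

section
/- Let $\lambda$ be a probability measure on $X$, $f : X \to X$ measurable with $f_*\lambda \ll \lambda$, and $\mu \ll \lambda$. Let $I$ be measurable with $0 < \lambda(I) < \infty$, and suppose there is $K > 0$ such that for all $n \ge 0$, $0 < \mu(f^{-n}(I)) < \infty$ and the distortion of $f^n_*\mu$ on $I$ relative to $\lambda$ is bounded by $K$. If $A \subseteq I$ is measurable with $\lambda(A) = 0$, then $\mu(f^{-n}(A)) = 0$ for all $n \ge 0$; consequently any limit measure $\nu$ of the normalized sums $Q_n\mu$ satisfies $\nu(A) = 0$, i.e., the limit measures are absolutely continuous with respect to $\lambda$ on $I$. -/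
open scoped ENNReal Topology
open MeasureTheory Set Function Filter

-- `b ≠ ∞` matters: in `ℝ≥0∞`, `a / ∞ = 0` for every `a`.
lemma ENNReal.eq_zero_of_div_le_mul_div {a b c d K : ℝ≥0∞} (hb : b ≠ ∞)
    (h : a / b ≤ K * (c / d)) (hc : c = 0) : a = 0 := by
  rw [hc, ENNReal.zero_div, mul_zero, nonpos_iff_eq_zero, ENNReal.div_eq_zero_iff] at h
  exact h.resolve_right hb

lemma eq_zero_of_tendsto_div_of_numerator_eq_zero {ι : Type*} {l : Filter ι} [l.NeBot]
    {u v : ι → ℝ≥0∞} {c : ℝ≥0∞} (hu : ∀ i, u i = 0)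
    (h : Tendsto (fun i => u i / v i) l (𝓝 c)) : c = 0 := by
  simp only [hu, ENNReal.zero_div] at h
  exact tendsto_nhds_unique h tendsto_const_nhds

theorem stmt_13_general {X : Type*} [MeasurableSpace X]
    (lam : Measure X)
    (f : X → X)
    (mu : Measure X)
    (I : Set X)
    (K : ℝ≥0∞)
    (hfin : ∀ n : ℕ, 0 < mu (f^[n] ⁻¹' I) ∧ mu (f^[n] ⁻¹' I) < ⊤)
    (hdist : ∀ n : ℕ, ∀ A : Set X, MeasurableSet A → A ⊆ I →
      (1 / K) * (lam A / lam I) ≤ mu (f^[n] ⁻¹' A) / mu (f^[n] ⁻¹' I) ∧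
      mu (f^[n] ⁻¹' A) / mu (f^[n] ⁻¹' I) ≤ K * (lam A / lam I))
    (A : Set X) (hA : MeasurableSet A) (hAI : A ⊆ I) (hA0 : lam A = 0) :
    (∀ n : ℕ, mu (f^[n] ⁻¹' A) = 0) ∧
    ∀ (I₀ : Set X) (νA : ℝ≥0∞) (nk : ℕ → ℕ), StrictMono nk →
      Tendsto (fun k =>
          (∑ i ∈ Finset.range (nk k), mu (f^[i] ⁻¹' A)) /
            (∑ i ∈ Finset.range (nk k), mu (f^[i] ⁻¹' I₀))) atTop (𝓝 νA) →
      νA = 0 := by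
  have hzero : ∀ n, mu (f^[n] ⁻¹' A) = 0 := fun n =>
    ENNReal.eq_zero_of_div_le_mul_div (hfin n).2.ne (hdist n A hA hAI).2 hA0
  refine ⟨hzero, fun I₀ νA nk _ htend => ?_⟩
  exact eq_zero_of_tendsto_div_of_numerator_eq_zero
    (fun k => Finset.sum_eq_zero fun i _ => hzero i) htend

theorem stmt_13 {X : Type*} [MeasurableSpace X]
    (lam : Measure X) [IsProbabilityMeasure lam]
    (f : X → X) (hf : Measurable f)
    (hquasi : lam.map f ≪ lam)
    (mu : Measure X) (hmu : mu ≪ lam)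
    (I : Set X) (hI : MeasurableSet I)
    (hlI : 0 < lam I) (hlI' : lam I < ⊤)
    (K : ℝ≥0∞) (hK : 0 < K)
    (hfin : ∀ n : ℕ, 0 < mu (f^[n] ⁻¹' I) ∧ mu (f^[n] ⁻¹' I) < ⊤)
    (hdist : ∀ n : ℕ, ∀ A : Set X, MeasurableSet A → A ⊆ I →
      (1 / K) * (lam A / lam I) ≤ mu (f^[n] ⁻¹' A) / mu (f^[n] ⁻¹' I) ∧
      mu (f^[n] ⁻¹' A) / mu (f^[n] ⁻¹' I) ≤ K * (lam A / lam I))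
    (A : Set X) (hA : MeasurableSet A) (hAI : A ⊆ I) (hA0 : lam A = 0) :
    (∀ n : ℕ, mu (f^[n] ⁻¹' A) = 0) ∧
    ∀ (I₀ : Set X) (νA : ℝ≥0∞) (nk : ℕ → ℕ), StrictMono nk →
      Tendsto (fun k =>
          (∑ i ∈ Finset.range (nk k), mu (f^[i] ⁻¹' A)) /
            (∑ i ∈ Finset.range (nk k), mu (f^[i] ⁻¹' I₀))) atTop (𝓝 νA) →
      νA = 0 :=
  stmt_13_general lam f mu I K hfin hdist A hA hAI hA0
end

section
/- Let $\lambda$ be a probability measure on $X$, $f$ measurable with $f_*\lambda \ll \lambda$, $\mu \ll \lambda$, and $I$ a measurable set with $0 < \lambda(I) < \infty$. Suppose for some $K > 0$ all pushforwards $f^n_*\mu$ have distortion on $I$ bounded by $K$ (and $0 < \mu(f^{-n}(I)) < \infty$). Then for every measurable $A \subseteq I$ with $\lambda(A) > 0$ and every $n \ge 0$, $\mu(f^{-n}(A)) \ge \frac{1}{K}\frac{\lambda(A)}{\lambda(I)}\mu(f^{-n}(I)) > 0$; hence any limit measure $\nu$ of $Q_n\mu$ with $\nu(I) > 0$ satisfies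 $\nu(A) > 0$, i.e., $\nu$ is equivalent to $\lambda$ on $I$. -/
open scoped ENNReal Topology
open MeasureTheory Set Function Filter

/-! Clearing the denominator in the lower distortion bound gives
`μ(f⁻ⁿ A) ≥ c μ(f⁻ⁿ I)` with `c = λ(A) / (K λ(I)) ∈ (0, ∞)`. This inequality survives summing
over `n < n_k`, dividing by the common normaliser and passing to the limit, so `ν(A) ≥ c ν(I) > 0`. -/

namespace ENNReal

theorem one_div_mul_div_ne_zero {K a b : ℝ≥0∞} (hK : K ≠ ⊤) (ha : a ≠ 0) (hb : b ≠ ⊤) :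
    1 / K * (a / b) ≠ 0 := by
  simp [div_eq_zero_iff, hK, ha, hb]

theorem one_div_mul_div_ne_top {K a b : ℝ≥0∞} (hK : K ≠ 0) (ha : a ≠ ⊤) (hb : b ≠ 0) :
    1 / K * (a / b) ≠ ⊤ :=
  mul_ne_top (by simp [hK]) (by simp [div_eq_top, ha, hb])

theorem mul_le_of_tendsto_div {ι : Type*} {l : Filter ι} [l.NeBot] {a b d : ι → ℝ≥0∞}
    {c x y : ℝ≥0∞} (hc : c ≠ ⊤) (hab : ∀ᶠ i in l, c * a i ≤ b i)
    (ha : Tendsto (fun i => a i / d i) l (𝓝 x)) (hb : Tendsto (fun i => b i / d i) l (𝓝 y)) :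
    c * x ≤ y :=
  le_of_tendsto_of_tendsto (ENNReal.Tendsto.const_mul ha (Or.inr hc)) hb <| hab.mono fun i hi => by
    simpa only [← mul_div_assoc] using ENNReal.div_le_div_right hi (d i)

end ENNReal

theorem stmt_14_general {X : Type*} [MeasurableSpace X]
    (lam : Measure X)
    (f : X → X)
    (mu : Measure X)
    (I : Set X)
    (hlI : 0 < lam I) (hlI' : lam I < ⊤)
    (K : ℝ≥0∞) (hK : 0 < K) (hK' : K < ⊤)
    (hfin : ∀ n : ℕ, 0 < mu (f^[n] ⁻¹' I) ∧ mu (f^[n] ⁻¹' I) < ⊤)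
    (hdist : ∀ n : ℕ, ∀ A : Set X, MeasurableSet A → A ⊆ I →
      (1 / K) * (lam A / lam I) ≤ mu (f^[n] ⁻¹' A) / mu (f^[n] ⁻¹' I) ∧
      mu (f^[n] ⁻¹' A) / mu (f^[n] ⁻¹' I) ≤ K * (lam A / lam I))
    (A : Set X) (hA : MeasurableSet A) (hAI : A ⊆ I) (hA0 : 0 < lam A) :
    (∀ n : ℕ,
      (1 / K) * (lam A / lam I) * mu (f^[n] ⁻¹' I) ≤ mu (f^[n] ⁻¹' A) ∧
      0 < mu (f^[n] ⁻¹' A)) ∧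
    ∀ (I₀ : Set X) (νA νI : ℝ≥0∞) (nk : ℕ → ℕ), StrictMono nk →
      Tendsto (fun k =>
          (∑ i ∈ Finset.range (nk k), mu (f^[i] ⁻¹' A)) /
            (∑ i ∈ Finset.range (nk k), mu (f^[i] ⁻¹' I₀))) atTop (𝓝 νA) →
      Tendsto (fun k =>
          (∑ i ∈ Finset.range (nk k), mu (f^[i] ⁻¹' I)) /
            (∑ i ∈ Finset.range (nk k), mu (f^[i] ⁻¹' I₀))) atTop (𝓝 νI) →
      0 < νI → 0 < νA := by
  set c : ℝ≥0∞ := (1 / K) * (lam A / lam I)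
  have hc0 : c ≠ 0 := ENNReal.one_div_mul_div_ne_zero hK'.ne hA0.ne' hlI'.ne
  have hcT : c ≠ ⊤ := ENNReal.one_div_mul_div_ne_top hK.ne'
    ((measure_mono hAI).trans_lt hlI').ne hlI.ne'
  have hbound (n : ℕ) : c * mu (f^[n] ⁻¹' I) ≤ mu (f^[n] ⁻¹' A) :=
    (ENNReal.le_div_iff_mul_le (Or.inl (hfin n).1.ne') (Or.inl (hfin n).2.ne)).1
      (hdist n A hA hAI).1
  refine ⟨fun n => ⟨hbound n, (ENNReal.mul_pos hc0 (hfin n).1.ne').trans_le (hbound n)⟩, ?_⟩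
  intro I₀ νA νI nk _ hνA hνI hνI0
  have hsum (k : ℕ) : c * ∑ i ∈ Finset.range (nk k), mu (f^[i] ⁻¹' I) ≤
      ∑ i ∈ Finset.range (nk k), mu (f^[i] ⁻¹' A) := by
    rw [Finset.mul_sum]
    exact Finset.sum_le_sum fun i _ => hbound i
  exact (ENNReal.mul_pos hc0 hνI0.ne').trans_le
    (ENNReal.mul_le_of_tendsto_div hcT (Eventually.of_forall hsum) hνI hνA)

theorem stmt_14 {X : Type*} [MeasurableSpace X]
    (lam : Measure X) [IsProbabilityMeasure lam]
    (f : X → X) (hf : Measurable f)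
    (hquasi : lam.map f ≪ lam)
    (mu : Measure X) (hmu : mu ≪ lam)
    (I : Set X) (hI : MeasurableSet I)
    (hlI : 0 < lam I) (hlI' : lam I < ⊤)
    (K : ℝ≥0∞) (hK : 0 < K) (hK' : K < ⊤)
    (hfin : ∀ n : ℕ, 0 < mu (f^[n] ⁻¹' I) ∧ mu (f^[n] ⁻¹' I) < ⊤)
    (hdist : ∀ n : ℕ, ∀ A : Set X, MeasurableSet A → A ⊆ I →
      (1 / K) * (lam A / lam I) ≤ mu (f^[n] ⁻¹' A) / mu (f^[n] ⁻¹' I) ∧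
      mu (f^[n] ⁻¹' A) / mu (f^[n] ⁻¹' I) ≤ K * (lam A / lam I))
    (A : Set X) (hA : MeasurableSet A) (hAI : A ⊆ I) (hA0 : 0 < lam A) :
    (∀ n : ℕ,
      (1 / K) * (lam A / lam I) * mu (f^[n] ⁻¹' I) ≤ mu (f^[n] ⁻¹' A) ∧
      0 < mu (f^[n] ⁻¹' A)) ∧
    ∀ (I₀ : Set X) (νA νI : ℝ≥0∞) (nk : ℕ → ℕ), StrictMono nk →
      Tendsto (fun k =>
          (∑ i ∈ Finset.range (nk k), mu (f^[i] ⁻¹' A)) /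
            (∑ i ∈ Finset.range (nk k), mu (f^[i] ⁻¹' I₀))) atTop (𝓝 νA) →
      Tendsto (fun k =>
          (∑ i ∈ Finset.range (nk k), mu (f^[i] ⁻¹' I)) /
            (∑ i ∈ Finset.range (nk k), mu (f^[i] ⁻¹' I₀))) atTop (𝓝 νI) →
      0 < νI → 0 < νA :=
  stmt_14_general lam f mu I hlI hlI' K hK hK' hfin hdist A hA hAI hA0
end

section
/- Let $X$ be a compact metric space, $I \subseteq X$ a Borel set with $0 < \lambda(I) < \infty$ for a Borel probability measure $\lambda$, and $K > 0$. The set of Borel measures $\mu$ on $I$ satisfying $1/K \le \mu(I) \le K$ and the distortion bound $(1/K)\lambda(A)/\lambda(I) \le \mu(A)/\mu(I) \le K\lambda(A)/\lambda(I)$ for all Borel $A \subseteq I$, is sequentially compact in the topology of weak convergence of measures on $X$: every sequence in this set has a subsequence converging weakly to a measure $\mu$ with $\mu(X\setminus \bar I)=0$, $1/K \le \mu(X) \le K$, and satisfying $(1/K)\lambda(A)/\lambda(I) \le \mu(A)/\mu(X) \le K\lambda(A)/\lambda(I)$ for Borel sets $A\subseteq I$ whose boundary is a $\mu$-null and $\lambda$-null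 set. -/
/-!
Every measure of the family is dominated by `(K²/λ(I)) • λ`: for `A ⊆ I` the distortion bound
gives `μ A ≤ K (λ A / λ I) μ I ≤ K² λ A / λ I`. Hence the densities of the `μₖ` with respect to
this finite measure are bounded by `1` and form a bounded sequence in the separable Hilbert space
`L²`. By the sequential Banach–Alaoglu theorem a subsequence converges weakly; testing against
indicators shows that the weak limit is an a.e. nonnegative density, and the measure `μ` with that
density is the limit of the subsequence against every bounded measurable function, in particular
setwise. The mass, support and distortion bounds are closed conditions on finitely many values of
the measures, so they pass to this setwise limit.
-/

open scoped ENNReal Topology InnerProductSpace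
open MeasureTheory Set Filter

theorem exists_subseq_tendsto_inner {𝕜 E : Type*} [RCLike 𝕜] [NormedAddCommGroup E]
    [InnerProductSpace 𝕜 E] [CompleteSpace E] [TopologicalSpace.SeparableSpace E]
    {x : ℕ → E} {C : ℝ} (hx : ∀ k, ‖x k‖ ≤ C) :
    ∃ y : E, ∃ φ : ℕ → ℕ, StrictMono φ ∧
      ∀ g, Tendsto (fun k => ⟪x (φ k), g⟫_𝕜) atTop (𝓝 ⟪y, g⟫_𝕜) := by
  let T : ℕ → WeakDual 𝕜 E := fun k =>
    StrongDual.toWeakDual (InnerProductSpace.toDual 𝕜 E (x k))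
  have hT : ∀ k, T k ∈ WeakDual.toStrongDual ⁻¹' Metric.closedBall 0 C := fun k => by
    simpa [T] using hx k
  obtain ⟨a, -, φ, hφ, hlim⟩ := WeakDual.isSeqCompact_closedBall 𝕜 E 0 C hT
  refine ⟨(InnerProductSpace.toDual 𝕜 E).symm (WeakDual.toStrongDual a), φ, hφ,
    fun g => ?_⟩
  rw [InnerProductSpace.toDual_symm_apply]
  exact ((WeakDual.eval_continuous g).tendsto a).comp hlim

namespace MeasureTheory

variable {X : Type*} [MeasurableSpace X]

theorem le_smul_of_ratio_le {μ lam : Measure X} {I : Set X} {K : ℝ≥0∞} (hI : MeasurableSet I)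
    (hsupp : μ Iᶜ = 0) (hmass : μ I ≤ K) (hK : K ≠ ∞)
    (hdist : ∀ A, MeasurableSet A → A ⊆ I → μ A / μ I ≤ K * (lam A / lam I)) :
    μ ≤ (K * K / lam I) • lam := by
  refine Measure.le_iff.mpr fun A hA => ?_
  rw [← measure_inter_conull hsupp, Measure.smul_apply, smul_eq_mul]
  rcases eq_or_ne (μ I) 0 with h0 | h0
  · simp [measure_mono_null inter_subset_right h0]
  calc μ (A ∩ I) = μ (A ∩ I) / μ I * μ I :=
        (ENNReal.div_mul_cancel h0 (hmass.trans_lt hK.lt_top).ne).symm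
    _ ≤ K * (lam (A ∩ I) / lam I) * K :=
        mul_le_mul' (hdist _ (hA.inter hI) inter_subset_right) hmass
    _ ≤ K * (lam A / lam I) * K := by gcongr; exact inter_subset_left
    _ = K * K / lam I * lam A := by rw [div_eq_mul_inv, div_eq_mul_inv]; ring

theorem tendsto_measure_of_tendsto_integral_indicator {ι : Type*} {l : Filter ι}
    {μ : ι → Measure X} {ρ : Measure X} {s : Set X} (hs : MeasurableSet s)
    (hμ : ∀ i, μ i s ≠ ∞) (hρ : ρ s ≠ ∞)
    (h : Tendsto (fun i => ∫ x, s.indicator (1 : X → ℝ) x ∂μ i) l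
      (𝓝 (∫ x, s.indicator (1 : X → ℝ) x ∂ρ))) :
    Tendsto (fun i => μ i s) l (𝓝 (ρ s)) := by
  simp_rw [integral_indicator_one hs, measureReal_def] at h
  exact (ENNReal.tendsto_toReal_iff hμ hρ).mp h

theorem ae_norm_toReal_rnDeriv_le_one {μ ν : Measure X} [SigmaFinite ν] (hμν : μ ≤ ν) :
    ∀ᵐ x ∂ν, ‖(μ.rnDeriv ν x).toReal‖ ≤ 1 := by
  filter_upwards [Measure.rnDeriv_le_one_of_le hμν] with x hx
  rw [Real.norm_of_nonneg ENNReal.toReal_nonneg]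
  exact ENNReal.toReal_le_of_le_ofReal zero_le_one (by simpa using hx)

theorem L2.inner_toLp_eq_integral_mul {ν : Measure X} {g : X → ℝ} (hg : MemLp g 2 ν)
    (u : Lp ℝ 2 ν) : ⟪u, hg.toLp g⟫_ℝ = ∫ x, u x * g x ∂ν := by
  rw [L2.inner_def]
  refine integral_congr_ae ?_
  filter_upwards [hg.coeFn_toLp] with x hx
  rw [hx, real_inner_eq_re_inner, RCLike.inner_apply, mul_comm]
  simp

theorem exists_subseq_tendsto_integral_mul_of_le [MeasurableSpace.CountablyGenerated X]
    (ν : Measure X) [IsFiniteMeasure ν] (μ : ℕ → Measure X) (hμ : ∀ k, μ k ≤ ν) :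
    ∃ f : Lp ℝ 2 ν, ∃ φ : ℕ → ℕ, StrictMono φ ∧ ∀ g : X → ℝ, MemLp g ∞ ν →
      Tendsto (fun k => ∫ x, g x ∂μ (φ k)) atTop (𝓝 (∫ x, f x * g x ∂ν)) := by
  -- makes `Lp.SecondCountableTopology` apply, so that `L²(ν)` is separable
  have : Fact ((2 : ℝ≥0∞) ≠ ∞) := ⟨ENNReal.ofNat_ne_top⟩
  have hmem : ∀ k, MemLp (fun x => ((μ k).rnDeriv ν x).toReal) 2 ν := fun k =>
    (memLp_top_of_bound (Measure.measurable_rnDeriv _ _).ennreal_toReal.aestronglyMeasurable 1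
      (ae_norm_toReal_rnDeriv_le_one (hμ k))).mono_exponent le_top
  let h : ℕ → Lp ℝ 2 ν := fun k => (hmem k).toLp _
  have hbound : ∀ k, ‖h k‖ ≤ measureUnivNNReal ν ^ (2 : ℝ≥0∞).toReal⁻¹ * 1 := fun k => by
    refine Lp.norm_le_of_ae_bound zero_le_one ?_
    filter_upwards [(hmem k).coeFn_toLp, ae_norm_toReal_rnDeriv_le_one (hμ k)] with x hx hle
    rwa [hx]
  obtain ⟨f, φ, hφ, hf⟩ := exists_subseq_tendsto_inner (𝕜 := ℝ) hbound
  refine ⟨f, φ, hφ, fun g hg => ?_⟩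
  have hg2 : MemLp g 2 ν := hg.mono_exponent le_top
  have hint : ∀ k, ∫ x, g x ∂μ k = ⟪h k, hg2.toLp g⟫_ℝ := fun k => by
    have : IsFiniteMeasure (μ k) := isFiniteMeasure_of_le ν (hμ k)
    rw [L2.inner_toLp_eq_integral_mul, ← integral_toReal_rnDeriv_mul
      (Measure.absolutelyContinuous_of_le (hμ k))]
    exact integral_congr_ae (by filter_upwards [(hmem k).coeFn_toLp] with x hx; rw [hx])
  simpa only [hint, L2.inner_toLp_eq_integral_mul] using hf (hg2.toLp g)

theorem exists_subseq_tendsto_integral_of_le [MeasurableSpace.CountablyGenerated X]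
    (ν : Measure X) [IsFiniteMeasure ν] (μ : ℕ → Measure X) (hμ : ∀ k, μ k ≤ ν) :
    ∃ ρ : Measure X, IsFiniteMeasure ρ ∧ ∃ φ : ℕ → ℕ, StrictMono φ ∧ ∀ g : X → ℝ, MemLp g ∞ ν →
      Tendsto (fun k => ∫ x, g x ∂μ (φ k)) atTop (𝓝 (∫ x, g x ∂ρ)) := by
  obtain ⟨f, φ, hφ, hf⟩ := exists_subseq_tendsto_integral_mul_of_le ν μ hμ
  have hf_int : Integrable f ν := (Lp.memLp f).integrable one_le_two
  have hf_nonneg : 0 ≤ᵐ[ν] f := by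
    refine ae_nonneg_of_forall_setIntegral_nonneg hf_int fun s hs _ => ?_
    have hlim := hf (s.indicator 1) ((memLp_top_const 1).indicator hs)
    simp_rw [← indicator_mul_right, integral_indicator hs, Pi.one_apply, mul_one] at hlim
    exact ge_of_tendsto' hlim fun k => integral_nonneg fun _ => zero_le_one
  refine ⟨ν.withDensity fun x => ENNReal.ofReal (f x), isFiniteMeasure_withDensity_ofReal hf_int.2,
    φ, hφ, fun g hg => ?_⟩
  convert hf g hg using 2
  rw [integral_withDensity_eq_integral_toReal_smul
    (Lp.stronglyMeasurable f).measurable.ennreal_ofReal (ae_of_all _ fun _ => ENNReal.ofReal_lt_top)]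
  refine integral_congr_ae ?_
  filter_upwards [hf_nonneg] with x hx
  rw [ENNReal.toReal_ofReal hx, smul_eq_mul]

end MeasureTheory

theorem stmt_15_general {X : Type*} [MetricSpace X] [CompactSpace X]
    [MeasurableSpace X] [BorelSpace X]
    (lam : Measure X) [IsProbabilityMeasure lam]
    (I : Set X) (hI : MeasurableSet I)
    (hlI : 0 < lam I)
    (K : ℝ≥0∞) (hK' : K < ⊤)
    (mus : ℕ → Measure X)
    (hsupp : ∀ k, mus k (univ \ I) = 0)
    (hmass : ∀ k, 1 / K ≤ mus k I ∧ mus k I ≤ K)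
    (hdist : ∀ k, ∀ A : Set X, MeasurableSet A → A ⊆ I →
      (1 / K) * (lam A / lam I) ≤ mus k A / mus k I ∧
      mus k A / mus k I ≤ K * (lam A / lam I)) :
    ∃ (mu : Measure X) (_ : IsFiniteMeasure mu) (φ : ℕ → ℕ), StrictMono φ ∧
      (∀ g : C(X, ℝ), Tendsto (fun k => ∫ x, g x ∂(mus (φ k))) atTop
        (𝓝 (∫ x, g x ∂mu))) ∧
      mu (univ \ closure I) = 0 ∧
      (1 / K ≤ mu univ ∧ mu univ ≤ K) ∧
      (∀ A : Set X, MeasurableSet A → A ⊆ I →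
        mu (frontier A) = 0 → lam (frontier A) = 0 →
        (1 / K) * (lam A / lam I) ≤ mu A / mu univ ∧
        mu A / mu univ ≤ K * (lam A / lam I)) := by
  have hc : K * K / lam I ≠ ∞ := ENNReal.div_ne_top (ENNReal.mul_ne_top hK'.ne hK'.ne) hlI.ne'
  have : IsFiniteMeasure ((K * K / lam I) • lam) :=
    ⟨by simpa using ENNReal.mul_lt_top hc.lt_top (measure_lt_top lam univ)⟩
  have hdom : ∀ k, mus k ≤ (K * K / lam I) • lam := fun k =>
    le_smul_of_ratio_le hI (by rw [compl_eq_univ_sdiff]; exact hsupp k) (hmass k).2 hK'.ne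
      fun A hA hAI => (hdist k A hA hAI).2
  obtain ⟨mu, hmu, φ, hφ, hconv⟩ := exists_subseq_tendsto_integral_of_le _ mus hdom
  have hset : ∀ A, MeasurableSet A → Tendsto (fun k => mus (φ k) A) atTop (𝓝 (mu A)) :=
    fun A hA => tendsto_measure_of_tendsto_integral_indicator hA
      (fun k => ne_top_of_le_ne_top (measure_ne_top _ A) (Measure.le_iff'.mp (hdom _) A))
      (measure_ne_top mu A) (hconv _ ((memLp_top_const 1).indicator hA))
  have hunivI : ∀ k, mus k univ = mus k I := fun k => by
    rw [← measure_inter_conull' (hsupp k), univ_inter]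
  have hmass_lim : 1 / K ≤ mu univ ∧ mu univ ≤ K :=
    ⟨ge_of_tendsto' (hset univ .univ) fun k => hunivI (φ k) ▸ (hmass _).1,
      le_of_tendsto' (hset univ .univ) fun k => hunivI (φ k) ▸ (hmass _).2⟩
  refine ⟨mu, hmu, φ, hφ, fun g => hconv g (BoundedContinuousFunction.mkOfCompact g).memLp_top,
    ?_, hmass_lim, fun A hA hAI _ _ => ?_⟩
  · have hnull : ∀ k, mus (φ k) (univ \ closure I) = 0 := fun k =>
      measure_mono_null (sdiff_subset_sdiff_right subset_closure) (hsupp _)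
    exact tendsto_nhds_unique (hset _ (MeasurableSet.univ.diff isClosed_closure.measurableSet))
      (tendsto_const_nhds.congr fun k => (hnull k).symm)
  · have hmu0 : mu univ ≠ 0 := (ENNReal.div_pos one_ne_zero hK'.ne).trans_le hmass_lim.1 |>.ne'
    have hratio := ENNReal.Tendsto.div (hset A hA) (Or.inr hmu0) (hset univ .univ)
      (Or.inl (measure_ne_top mu univ))
    simp_rw [hunivI] at hratio
    exact ⟨ge_of_tendsto' hratio fun k => (hdist _ A hA hAI).1,
      le_of_tendsto' hratio fun k => (hdist _ A hA hAI).2⟩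

theorem stmt_15 {X : Type*} [MetricSpace X] [CompactSpace X]
    [MeasurableSpace X] [BorelSpace X]
    (lam : Measure X) [IsProbabilityMeasure lam]
    (I : Set X) (hI : MeasurableSet I)
    (hlI : 0 < lam I) (hlI' : lam I < ⊤)
    (K : ℝ≥0∞) (hK : 0 < K) (hK' : K < ⊤)
    (mus : ℕ → Measure X) (hfin : ∀ k, IsFiniteMeasure (mus k))
    (hsupp : ∀ k, mus k (univ \ I) = 0)
    (hmass : ∀ k, 1 / K ≤ mus k I ∧ mus k I ≤ K)
    (hdist : ∀ k, ∀ A : Set X, MeasurableSet A → A ⊆ I →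
      (1 / K) * (lam A / lam I) ≤ mus k A / mus k I ∧
      mus k A / mus k I ≤ K * (lam A / lam I)) :
    ∃ (mu : Measure X) (_ : IsFiniteMeasure mu) (φ : ℕ → ℕ), StrictMono φ ∧
      (∀ g : C(X, ℝ), Tendsto (fun k => ∫ x, g x ∂(mus (φ k))) atTop
        (𝓝 (∫ x, g x ∂mu))) ∧
      mu (univ \ closure I) = 0 ∧
      (1 / K ≤ mu univ ∧ mu univ ≤ K) ∧
      (∀ A : Set X, MeasurableSet A → A ⊆ I →
        mu (frontier A) = 0 → lam (frontier A) = 0 →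
        (1 / K) * (lam A / lam I) ≤ mu A / mu univ ∧
        mu A / mu univ ≤ K * (lam A / lam I)) :=
  stmt_15_general lam I hI hlI K hK' mus hsupp hmass hdist
end
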